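/- Maassen–Uffink-type bound via Rényi entropies for POVMs: for any state ρ_A and POVMs {M_x}, {N_z}, H_∞(X) + H_{1/2}(Z) ≥ q, where H_∞(X) = −log₂ max_x P_X(x), H_{1/2}(Z) = 2 log₂ Σ_z √(P_Z(z)), P_X(x) = Tr(M_x ρ_A), P_Z(z) = Tr(N_z ρ_A), and q = −log₂ max_{x,z}‖√(M_x)√(N_z)‖∞². -/

import Mathlib

open scoped Matrix.Norms.L2Operator Kronecker ComplexOrder
open Matrix Finset

noncomputable section

/-- The square root of a positive semidefinite matrix, as defined in Mathlib (December 2024),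
where it was `Matrix.PosSemidef.sqrt`; it has since been removed. -/
def Matrix.PosSemidef.sqrt {n 𝕜 : Type*} [Fintype n] [DecidableEq n] [RCLike 𝕜]
    {A : Matrix n n 𝕜} (hA : A.PosSemidef) : Matrix n n 𝕜 :=
  hA.1.eigenvectorUnitary.1 * diagonal ((↑) ∘ (√·) ∘ hA.1.eigenvalues) *
    (star hA.1.eigenvectorUnitary : Matrix n n 𝕜)

namespace MUaux

lemma sqrt_isHermitian {n : Type*} [Fintype n] [DecidableEq n] {A : Matrix n n ℂ}
    (hA : A.PosSemidef) : hA.sqrt.IsHermitian := by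
  unfold Matrix.PosSemidef.sqrt IsHermitian
  rw [conjTranspose_mul, conjTranspose_mul, diagonal_conjTranspose, ← Matrix.mul_assoc]
  congr 2
  · ext i j
    simp [diagonal_apply]
  · simp [Matrix.star_eq_conjTranspose]

lemma sqrt_mul_self' {n : Type*} [Fintype n] [DecidableEq n] {A : Matrix n n ℂ}
    (hA : A.PosSemidef) : hA.sqrt * hA.sqrt = A := by
  unfold Matrix.PosSemidef.sqrt
  have hu : (star hA.1.eigenvectorUnitary : Matrix n n ℂ) * hA.1.eigenvectorUnitary.1 = 1 :=
    Unitary.coe_star_mul_self _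
  have hd : diagonal ((↑) ∘ (√·) ∘ hA.1.eigenvalues) *
      diagonal ((↑) ∘ (√·) ∘ hA.1.eigenvalues) =
      diagonal (((↑) : ℝ → ℂ) ∘ hA.1.eigenvalues) := by
    rw [diagonal_mul_diagonal]
    congr 1
    ext i
    simp only [Function.comp_apply]
    rw [← Complex.ofReal_mul, Real.mul_self_sqrt (hA.eigenvalues_nonneg i)]
  conv_rhs => rw [hA.1.spectral_theorem, Unitary.conjStarAlgAut_apply]
  calc _ = hA.1.eigenvectorUnitary.1 * diagonal ((↑) ∘ (√·) ∘ hA.1.eigenvalues) *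
      ((star hA.1.eigenvectorUnitary : Matrix n n ℂ) * hA.1.eigenvectorUnitary.1) *
      diagonal ((↑) ∘ (√·) ∘ hA.1.eigenvalues) *
      (star hA.1.eigenvectorUnitary : Matrix n n ℂ) := by simp only [Matrix.mul_assoc]; rfl
    _ = _ := by rw [hu, Matrix.mul_one,
        Matrix.mul_assoc (hA.1.eigenvectorUnitary.1 : Matrix n n ℂ) _ (diagonal _), hd]; rfl

variable {n : Type*} [Fintype n] [DecidableEq n]

/-- View a matrix as a vector in Euclidean space (Frobenius/Hilbert-Schmidt structure). -/
def toEuc (X : Matrix n n ℂ) : EuclideanSpace ℂ (n × n) :=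
  WithLp.toLp 2 (fun p : n × n => X p.1 p.2)

lemma inner_toEuc (X Y : Matrix n n ℂ) :
    (inner ℂ (toEuc X) (toEuc Y) : ℂ) = (Xᴴ * Y).trace := by
  simp only [PiLp.inner_apply, toEuc, RCLike.inner_apply, Matrix.trace, Matrix.diag,
    Matrix.mul_apply, Matrix.conjTranspose_apply]
  rw [Fintype.sum_prod_type]
  exact Finset.sum_comm.trans (by simp [mul_comm])

lemma norm_toEuc_sq (X : Matrix n n ℂ) : ‖toEuc X‖ ^ 2 = (Xᴴ * X).trace.re := by
  rw [← inner_self_eq_norm_sq (𝕜 := ℂ), inner_toEuc]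
  rfl

lemma norm_toEuc_sq' (X : Matrix n n ℂ) : ‖toEuc X‖ ^ 2 = ∑ p : n × n, ‖X p.1 p.2‖ ^ 2 := by
  rw [EuclideanSpace.norm_eq, Real.sq_sqrt (by positivity)]
  rfl

lemma norm_toEuc_mul_le (K B : Matrix n n ℂ) : ‖toEuc (K * B)‖ ≤ ‖K‖ * ‖toEuc B‖ := by
  have h0 : (0:ℝ) ≤ ‖K‖ * ‖toEuc B‖ := by positivity
  rw [← Real.sqrt_sq (norm_nonneg (toEuc (K*B))), ← Real.sqrt_sq h0]
  apply Real.sqrt_le_sqrt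
  rw [mul_pow, norm_toEuc_sq', norm_toEuc_sq']
  calc ∑ p : n × n, ‖(K * B) p.1 p.2‖ ^ 2
      = ∑ j, ∑ i, ‖(K * B) i j‖ ^ 2 := by
        rw [Fintype.sum_prod_type]; exact Finset.sum_comm
    _ ≤ ∑ j, ‖K‖ ^ 2 * ∑ i, ‖B i j‖ ^ 2 := by
        refine Finset.sum_le_sum fun j _ => ?_
        have hcol : ∑ i, ‖(K * B) i j‖ ^ 2
            = ‖(EuclideanSpace.equiv n ℂ).symm (K *ᵥ fun k => B k j)‖ ^ 2 := by
          rw [EuclideanSpace.norm_eq, Real.sq_sqrt (by positivity)]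
          simp [Matrix.mul_apply, Matrix.mulVec, dotProduct]
        have hb : ∑ i, ‖B i j‖ ^ 2
            = ‖(EuclideanSpace.equiv n ℂ).symm (fun k => B k j)‖ ^ 2 := by
          rw [EuclideanSpace.norm_eq, Real.sq_sqrt (by positivity)]
          simp
        rw [hcol, hb, ← mul_pow]
        have := Matrix.l2_opNorm_mulVec K ((EuclideanSpace.equiv n ℂ).symm (fun k => B k j))
        exact pow_le_pow_left₀ (norm_nonneg _) this 2
    _ = ‖K‖ ^ 2 * ∑ p : n × n, ‖B p.1 p.2‖ ^ 2 := by
        rw [← Finset.mul_sum]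
        congr 1
        rw [Fintype.sum_prod_type]
        exact Finset.sum_comm

end MUaux
set_option maxHeartbeats 1000000 in
/-- Maassen–Uffink-type bound via Rényi entropies for POVMs:
`H_∞(X) + H_{1/2}(Z) ≥ q`, where `H_∞(X) = −log₂ max_x P_X(x)`,
`H_{1/2}(Z) = 2 log₂ Σ_z √(P_Z(z))`, `P_X(x) = Tr(M_x ρ_A)`, `P_Z(z) = Tr(N_z ρ_A)`,
and `q = −log₂ max_{x,z} ‖√(M_x)√(N_z)‖∞²`. -/
theorem maassen_uffink_renyi {n F G : Type*} [Fintype n] [DecidableEq n]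
    [Fintype F] [Nonempty F] [Fintype G] [Nonempty G]
    (ρ : Matrix n n ℂ) (hρ : ρ.PosSemidef) (htr : ρ.trace = 1)
    (M : F → Matrix n n ℂ) (N : G → Matrix n n ℂ)
    (hM : ∀ x, (M x).PosSemidef) (hN : ∀ z, (N z).PosSemidef)
    (hMsum : ∑ x, M x = 1) (hNsum : ∑ z, N z = 1) :
    (- Real.logb 2 ((univ : Finset F).sup' univ_nonempty
        fun x => ((M x * ρ).trace).re))
      + 2 * Real.logb 2 (∑ z : G, Real.sqrt (((N z * ρ).trace).re))
      ≥ - Real.logb 2 ((univ : Finset (F × G)).sup' univ_nonempty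
          fun p => ‖(hM p.1).sqrt * (hN p.2).sqrt‖ ^ 2) := by
  classical
  set c : ℝ := (univ : Finset (F × G)).sup' univ_nonempty
      (fun p => ‖(hM p.1).sqrt * (hN p.2).sqrt‖ ^ 2) with hc
  set S : ℝ := ∑ z : G, Real.sqrt (((N z * ρ).trace).re) with hSdef
  set pmax : ℝ := (univ : Finset F).sup' univ_nonempty (fun x => ((M x * ρ).trace).re)
    with hpdef
  clear_value c S pmax
  -- `P(Q) = ‖√Q √ρ‖²`
  have keyP : ∀ (Q : Matrix n n ℂ) (hQ : Q.PosSemidef),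
      ((Q * ρ).trace).re = ‖MUaux.toEuc (hQ.sqrt * hρ.sqrt)‖ ^ 2 := by
    intro Q hQ
    rw [MUaux.norm_toEuc_sq]
    have h1 : ((hQ.sqrt * hρ.sqrt)ᴴ * (hQ.sqrt * hρ.sqrt)).trace = (Q * ρ).trace := by
      rw [conjTranspose_mul, MUaux.sqrt_isHermitian hQ, MUaux.sqrt_isHermitian hρ]
      have h2 : (hρ.sqrt * hQ.sqrt) * (hQ.sqrt * hρ.sqrt) = hρ.sqrt * Q * hρ.sqrt := by
        rw [mul_assoc, ← mul_assoc hQ.sqrt hQ.sqrt, MUaux.sqrt_mul_self' hQ, ← mul_assoc]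
      rw [h2, trace_mul_cycle, MUaux.sqrt_mul_self' hρ, trace_mul_comm]
    rw [h1]
  have hPX : ∀ x, (0:ℝ) ≤ ((M x * ρ).trace).re := fun x => by
    rw [keyP (M x) (hM x)]; positivity
  have hPZ : ∀ z, (0:ℝ) ≤ ((N z * ρ).trace).re := fun z => by
    rw [keyP (N z) (hN z)]; positivity
  have hc0 : (0:ℝ) ≤ c := by
    obtain ⟨p⟩ := (inferInstance : Nonempty (F × G))
    rw [hc]
    exact le_trans (sq_nonneg _)
      (Finset.le_sup' (fun p : F × G => ‖(hM p.1).sqrt * (hN p.2).sqrt‖ ^ 2)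
        (Finset.mem_univ p))
  have hS0 : (0:ℝ) ≤ S := by
    rw [hSdef]; exact Finset.sum_nonneg fun z _ => Real.sqrt_nonneg _
  -- the core bound `P_X(x) ≤ c * S²`
  have key : ∀ x, ((M x * ρ).trace).re ≤ c * S ^ 2 := by
    intro x
    set A : Matrix n n ℂ := (hM x).sqrt * hρ.sqrt with hA
    have hdecomp : ((M x * ρ).trace).re
        = ∑ z : G, ((Aᴴ * (((hM x).sqrt * (hN z).sqrt) *
            ((hN z).sqrt * hρ.sqrt))).trace).re := by
      have hmat : ∑ z : G, Aᴴ * (((hM x).sqrt * (hN z).sqrt) * ((hN z).sqrt * hρ.sqrt))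
          = Aᴴ * A := by
        rw [← Finset.mul_sum]
        congr 1
        have : ∀ z : G, ((hM x).sqrt * (hN z).sqrt) * ((hN z).sqrt * hρ.sqrt)
            = (hM x).sqrt * (N z * hρ.sqrt) := by
          intro z
          rw [mul_assoc, ← mul_assoc (hN z).sqrt (hN z).sqrt, MUaux.sqrt_mul_self' (hN z)]
        simp_rw [this]
        rw [← Finset.mul_sum, ← Finset.sum_mul, hNsum, one_mul]
      have := congrArg (fun X : Matrix n n ℂ => X.trace.re) hmat
      simp only [trace_sum, Complex.re_sum] at this
      rw [this]
      have h1 := keyP (M x) (hM x)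
      rw [h1, MUaux.norm_toEuc_sq]
    rw [hdecomp]
    have hterm : ∀ z : G, ((Aᴴ * (((hM x).sqrt * (hN z).sqrt) *
          ((hN z).sqrt * hρ.sqrt))).trace).re
        ≤ ‖MUaux.toEuc A‖ * (Real.sqrt c * Real.sqrt (((N z * ρ).trace).re)) := by
      intro z
      rw [← MUaux.inner_toEuc]
      have hre : (inner ℂ (MUaux.toEuc A) (MUaux.toEuc (((hM x).sqrt * (hN z).sqrt) *
          ((hN z).sqrt * hρ.sqrt))) : ℂ).re
          ≤ ‖(inner ℂ (MUaux.toEuc A) (MUaux.toEuc (((hM x).sqrt * (hN z).sqrt) *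
              ((hN z).sqrt * hρ.sqrt))) : ℂ)‖ := Complex.re_le_norm _
      refine hre.trans ((norm_inner_le_norm _ _).trans ?_)
      refine mul_le_mul_of_nonneg_left ?_ (norm_nonneg _)
      refine (MUaux.norm_toEuc_mul_le _ _).trans ?_
      have h1 : ‖(hM x).sqrt * (hN z).sqrt‖ ≤ Real.sqrt c := by
        rw [← Real.sqrt_sq (norm_nonneg ((hM x).sqrt * (hN z).sqrt))]
        refine Real.sqrt_le_sqrt ?_
        rw [hc]
        exact Finset.le_sup' (fun p : F × G => ‖(hM p.1).sqrt * (hN p.2).sqrt‖ ^ 2)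
          (Finset.mem_univ (x, z))
      have h2 : ‖MUaux.toEuc ((hN z).sqrt * hρ.sqrt)‖ = Real.sqrt (((N z * ρ).trace).re) := by
        rw [keyP (N z) (hN z), Real.sqrt_sq (norm_nonneg _)]
      rw [h2]
      exact mul_le_mul_of_nonneg_right h1 (Real.sqrt_nonneg _)
    have hsum := Finset.sum_le_sum (fun z (_ : z ∈ (univ : Finset G)) => hterm z)
    refine le_trans hsum ?_
    rw [← Finset.mul_sum, ← Finset.mul_sum, ← hSdef]
    -- now: ‖toEuc A‖ * (√c * S) ≤ c * S²
    have hAsq : ‖MUaux.toEuc A‖ ^ 2 = ((M x * ρ).trace).re := (keyP (M x) (hM x)).symm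
    have hAle : ‖MUaux.toEuc A‖ ≤ Real.sqrt c * S := by
      rcases eq_or_lt_of_le (norm_nonneg (MUaux.toEuc A)) with h | h
      · rw [← h]; positivity
      · have := hdecomp
        rw [← hAsq] at this
        have h3 : ‖MUaux.toEuc A‖ ^ 2 ≤ ‖MUaux.toEuc A‖ * (Real.sqrt c * S) := by
          rw [this]
          refine le_trans hsum ?_
          rw [← Finset.mul_sum, ← Finset.mul_sum, ← hSdef]
        rw [pow_two] at h3
        exact le_of_mul_le_mul_left h3 h
    calc ‖MUaux.toEuc A‖ * (Real.sqrt c * S)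
        ≤ (Real.sqrt c * S) * (Real.sqrt c * S) :=
          mul_le_mul_of_nonneg_right hAle (mul_nonneg (Real.sqrt_nonneg c) hS0)
      _ = c * S ^ 2 := by
          rw [mul_mul_mul_comm, Real.mul_self_sqrt hc0, ← pow_two]
  -- positivity of pmax, c, S
  have hsum1 : ∑ x, ((M x * ρ).trace).re = 1 := by
    have : ∑ x, (M x * ρ).trace = 1 := by
      rw [← trace_sum, ← Finset.sum_mul, hMsum, one_mul, htr]
    calc ∑ x, ((M x * ρ).trace).re = (∑ x, (M x * ρ).trace).re := (Complex.re_sum _ _).symm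
      _ = 1 := by rw [this]; rfl
  have hpmax_pos : 0 < pmax := by
    by_contra h
    push_neg at h
    have : ∀ x : F, ((M x * ρ).trace).re = 0 := by
      intro x
      have h1 : ((M x * ρ).trace).re ≤ pmax := by
        rw [hpdef]
        exact Finset.le_sup' (fun x => ((M x * ρ).trace).re) (Finset.mem_univ x)
      linarith [hPX x]
    rw [Finset.sum_congr rfl (fun x _ => this x)] at hsum1
    simp at hsum1
  have hple : pmax ≤ c * S ^ 2 := by
    rw [hpdef]; exact Finset.sup'_le _ _ fun x _ => key x
  have hcpos : 0 < c := by
    rcases eq_or_lt_of_le hc0 with h | h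
    · exfalso; rw [← h] at hple; simp at hple; linarith
    · exact h
  have hSpos : 0 < S := by
    rcases eq_or_lt_of_le hS0 with h | h
    · exfalso; rw [← h] at hple; simp at hple; linarith
    · exact h
  -- conclude via log manipulation
  have h2 : Real.logb 2 pmax ≤ Real.logb 2 (c * S ^ 2) :=
    Real.logb_le_logb_of_le (by norm_num) hpmax_pos hple
  rw [Real.logb_mul (ne_of_gt hcpos) (by positivity), Real.logb_pow] at h2
  rw [ge_iff_le]
  push_cast at h2
  linarith
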